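/- arXiv:2307.11028 — 4 statements merged into one kernel-verified Lean document; each statement's English description precedes it below -/
import Mathlib

section
/- If z₁, z₂ lie in ℂ \ ℝ with Im z₁ and Im z₂ of opposite signs and η_* = min(|Im z₁|, |Im z₂|), then |m(z₁)m(z₂)/(1 - m(z₁)m(z₂))| ≤ C/η_* for an absolute constant C. -/
/-!
Writing `w = m(z)`, multiplying `w² + z w + 1 = 0` by `w̄` and taking imaginary parts gives
`Im z · |w|² = Im w · (1 - |w|²)`. As `Im z` and `Im w` have the same sign, `|w| < 1`, and then
`|Im w| ≤ |w|` yields `|Im z| · |w| ≤ 1 - |w|² ≤ 2 (1 - |w|)`, i.e. `|w| / (1 - |w|) ≤ 2 / |Im z|`.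
Since `‖w₁ w₂ / (1 - w₁ w₂)‖ ≤ |w₁| / (1 - |w₁|)` whenever `|w₁| < 1` and `|w₂| ≤ 1`, the constant
`C = 2` works.
-/

/-- `m` is the Stieltjes transform of the semicircle law: the (unique) solution
of `m(z)^2 + z·m(z) + 1 = 0` with `Im z · Im m(z) > 0` for all `z ∈ ℂ \ ℝ`. -/
def IsStieltjesSC (m : ℂ → ℂ) : Prop :=
  ∀ z : ℂ, z.im ≠ 0 → m z ^ 2 + z * m z + 1 = 0 ∧ 0 < z.im * (m z).im

open Complex

theorem norm_mul_div_one_sub_mul_le {a b : ℂ} (ha : ‖a‖ < 1) (hb : ‖b‖ ≤ 1) :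
    ‖a * b / (1 - a * b)‖ ≤ ‖a‖ / (1 - ‖a‖) := by
  have hab : ‖a * b‖ ≤ ‖a‖ := by
    simpa [norm_mul] using mul_le_mul_of_nonneg_left hb (norm_nonneg a)
  have hden : 1 - ‖a‖ ≤ ‖1 - a * b‖ := by
    have h := norm_sub_norm_le (1 : ℂ) (a * b)
    rw [norm_one] at h
    linarith
  rw [norm_div]
  exact div_le_div₀ (norm_nonneg a) hab (sub_pos.2 ha) hden

namespace SemicircleEquation

variable {w z : ℂ}

theorem im_mul_normSq_eq (hw : w ^ 2 + z * w + 1 = 0) :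
    z.im * normSq w = w.im * (1 - normSq w) := by
  have h := congrArg (fun x => (x * (starRingEnd ℂ) w).im) hw
  simp only [pow_two, mul_im, add_re, mul_re, one_re, conj_im, mul_neg, add_im, one_im, add_zero,
    conj_re, zero_mul, zero_im] at h
  rw [normSq_apply]
  linear_combination h

theorem ne_zero_of_mul_im_pos (hpos : 0 < z.im * w.im) : w ≠ 0 := by
  rintro rfl
  simp at hpos

variable (hw : w ^ 2 + z * w + 1 = 0) (hpos : 0 < z.im * w.im)
include hw hpos

theorem norm_lt_one : ‖w‖ < 1 := by
  have key : (z.im * w.im) * normSq w = w.im ^ 2 * (1 - normSq w) := by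
    linear_combination w.im * im_mul_normSq_eq hw
  have hs : normSq w < 1 := by
    have := key ▸ mul_pos hpos (normSq_pos.2 (ne_zero_of_mul_im_pos hpos))
    nlinarith [sq_nonneg w.im]
  rw [← sq_lt_one_iff₀ (norm_nonneg w), Complex.sq_norm]
  exact hs

theorem abs_im_mul_norm_le : |z.im| * ‖w‖ ≤ 1 - ‖w‖ ^ 2 := by
  have h1 : 0 < 1 - ‖w‖ ^ 2 := by nlinarith [norm_lt_one hw hpos, norm_nonneg w]
  have hw0 : 0 < ‖w‖ := norm_pos_iff.2 (ne_zero_of_mul_im_pos hpos)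
  have habs : |z.im| * ‖w‖ ^ 2 = |w.im| * (1 - ‖w‖ ^ 2) := by
    have h := congrArg abs (im_mul_normSq_eq hw)
    rwa [abs_mul, abs_mul, abs_of_pos (normSq_pos.2 (norm_pos_iff.1 hw0)),
      abs_of_pos (show 0 < 1 - normSq w by rwa [← Complex.sq_norm]), ← Complex.sq_norm] at h
  have : |z.im| * ‖w‖ ^ 2 ≤ ‖w‖ * (1 - ‖w‖ ^ 2) :=
    habs ▸ mul_le_mul_of_nonneg_right (abs_im_le_norm w) h1.le
  nlinarith

theorem norm_div_one_sub_norm_le : ‖w‖ / (1 - ‖w‖) ≤ 2 / |z.im| := by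
  have hr := norm_lt_one hw hpos
  have hz : 0 < |z.im| := abs_pos.2 (by rintro h; simp [h] at hpos)
  rw [div_le_div_iff₀ (sub_pos.2 hr) hz]
  nlinarith [abs_im_mul_norm_le hw hpos, norm_nonneg w]

end SemicircleEquation

/-- If `Im z₁` and `Im z₂` have opposite signs and `η⋆ = min(|Im z₁|, |Im z₂|)`,
then `|m(z₁)m(z₂)/(1 - m(z₁)m(z₂))| ≤ C/η⋆` for an absolute constant `C`. -/
theorem q_bound_opposite_signs :
    ∃ C : ℝ, 0 < C ∧ ∀ m : ℂ → ℂ, IsStieltjesSC m →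
      ∀ z₁ z₂ : ℂ, z₁.im ≠ 0 → z₂.im ≠ 0 → z₁.im * z₂.im < 0 →
        ‖m z₁ * m z₂ / (1 - m z₁ * m z₂)‖ ≤
          C / min |z₁.im| |z₂.im| := by
  refine ⟨2, two_pos, fun m hm z₁ z₂ h₁ h₂ _ => ?_⟩
  obtain ⟨hw₁, hpos₁⟩ := hm z₁ h₁
  obtain ⟨hw₂, hpos₂⟩ := hm z₂ h₂
  calc ‖m z₁ * m z₂ / (1 - m z₁ * m z₂)‖
      ≤ ‖m z₁‖ / (1 - ‖m z₁‖) :=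
        norm_mul_div_one_sub_mul_le (SemicircleEquation.norm_lt_one hw₁ hpos₁)
          (SemicircleEquation.norm_lt_one hw₂ hpos₂).le
    _ ≤ 2 / |z₁.im| := SemicircleEquation.norm_div_one_sub_norm_le hw₁ hpos₁
    _ ≤ 2 / min |z₁.im| |z₂.im| :=
        div_le_div_of_nonneg_left zero_le_two (lt_min (abs_pos.2 h₁) (abs_pos.2 h₂))
          (min_le_left _ _)
end

section
/- For any z ∈ ℂ \ ℝ, the Stieltjes transform of the semicircle law satisfies |m(z)| < 1. -/
open Complex

theorem im_mul_normSq_of_sq_add_mul_add_one_eq_zero {w z : ℂ} (h : w ^ 2 + z * w + 1 = 0) :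
    z.im * normSq w = w.im * (1 - normSq w) := by
  have hre := congrArg re h
  have him := congrArg im h
  simp only [sq, add_re, add_im, mul_re, mul_im, one_re, one_im, zero_re, zero_im] at hre him
  rw [normSq_apply]
  linear_combination w.re * him - w.im * hre

theorem norm_lt_one_of_sq_add_mul_add_one_eq_zero {w z : ℂ} (h : w ^ 2 + z * w + 1 = 0)
    (him : 0 < z.im * w.im) : ‖w‖ < 1 := by
  have hw : w.im ≠ 0 := by rintro hw; simp [hw] at him
  have hnormSq : 0 < normSq w := normSq_pos.mpr fun h0 => hw (by simp [h0])
  have key : 0 < w.im ^ 2 * (1 - normSq w) :=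
    calc 0 < z.im * w.im * normSq w := mul_pos him hnormSq
      _ = w.im ^ 2 * (1 - normSq w) := by
        rw [mul_right_comm, im_mul_normSq_of_sq_add_mul_add_one_eq_zero h]; ring
  have hlt : normSq w < 1 := sub_pos.mp (pos_of_mul_pos_right key (sq_nonneg _))
  rwa [normSq_eq_norm_sq, sq_lt_one_iff₀ (norm_nonneg w)] at hlt

/-- For any `z ∈ ℂ \ ℝ`, the Stieltjes transform of the semicircle law
satisfies `|m(z)| < 1`. -/
theorem mSC_abs_lt_one (m : ℂ → ℂ) (hm : IsStieltjesSC m)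
    (z : ℂ) (hz : z.im ≠ 0) : ‖m z‖ < 1 :=
  norm_lt_one_of_sq_add_mul_add_one_eq_zero (hm z hz).1 (hm z hz).2
end

section
/- For the Stieltjes transform m of the semicircle law and z₁ ≠ z₂ in ℂ \ ℝ, writing m₁ = m(z₁), m₂ = m(z₂) and m[1,2] = m₁m₂/(1 - m₁m₂), one has 1/(z₁ - z₂) = m[1,2]/(m₁ - m₂), i.e., (m(z₁) - m(z₂))/(z₁ - z₂) = m(z₁)m(z₂)/(1 - m(z₁)m(z₂)). -/
/-- For `z₁ ≠ z₂` in `ℂ \ ℝ`: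
`(m(z₁) - m(z₂))/(z₁ - z₂) = m(z₁)m(z₂)/(1 - m(z₁)m(z₂))`,
i.e. `1/(z₁ - z₂) = m[1,2]/(m₁ - m₂)` with `m[1,2] = m₁m₂/(1 - m₁m₂)`. -/
theorem mSC_divided_difference_identity (m : ℂ → ℂ) (hm : IsStieltjesSC m)
    (z₁ z₂ : ℂ) (h₁ : z₁.im ≠ 0) (h₂ : z₂.im ≠ 0) (hne : z₁ ≠ z₂) :
    (m z₁ - m z₂) / (z₁ - z₂) = m z₁ * m z₂ / (1 - m z₁ * m z₂) := by
  obtain ⟨e1, -⟩ := hm z₁ h₁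
  obtain ⟨e2, -⟩ := hm z₂ h₂
  have key : m z₁ * m z₂ * (z₁ - z₂) = (m z₁ - m z₂) * (1 - m z₁ * m z₂) := by
    linear_combination m z₂ * e1 - m z₁ * e2
  have hzne : z₁ - z₂ ≠ 0 := sub_ne_zero.mpr hne
  have hm1 : m z₁ ≠ 0 := by
    intro h; rw [h] at e1; simp at e1
  have hm2 : m z₂ ≠ 0 := by
    intro h; rw [h] at e2; simp at e2
  have h12 : 1 - m z₁ * m z₂ ≠ 0 := by
    intro h
    rw [h, mul_zero] at key
    rcases mul_eq_zero.mp key with h' | h'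
    · rcases mul_eq_zero.mp h' with h'' | h''
      · exact hm1 h''
      · exact hm2 h''
    · exact hzne h'
  field_simp
  linear_combination -key
end

section
/- The integral of the plane-wave test function against the semicircle density satisfies ∫_{-2}^{2} e^{itx} ρ_sc(x) dx = J₁(2t)/t for all real t ≠ 0, where J₁ is the Bessel function of the first kind of order 1. -/
/-!
Expand `e^{itx}` in its power series and integrate termwise, which dominated convergence allows
on a bounded interval. Under `x = 2 sin θ` the moments of `ρ_sc` become Wallis integrals: the odd
moments vanish and the `2k`-th moment is the Catalan number `(2k)! / (k! (k+1)!)`. So the `2k`-th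
term `(it)^{2k} / (2k)! · C_k = (-1)^k t^{2k} / (k! (k+1)!)` is the `k`-th term of `J₁(2t)/t`.
-/

/-- The semicircle density `ρ_sc(x) = √(4-x²)/(2π)` on `[-2,2]`. -/
noncomputable def rhoSC (x : ℝ) : ℝ := Real.sqrt (4 - x ^ 2) / (2 * Real.pi)

/-- The Bessel function of the first kind of order 1,
`J₁(z) = (z/2) ∑_{k≥0} (-1)^k (z²/4)^k / (k!(k+1)!)`. -/
noncomputable def besselJ1 (x : ℝ) : ℝ :=
  (x / 2) * ∑' k : ℕ,
    (-1 : ℝ) ^ k * (x ^ 2 / 4) ^ k / ((Nat.factorial k : ℝ) * (Nat.factorial (k + 1) : ℝ))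

open Real intervalIntegral MeasureTheory Nat

lemma integral_eq_zero_of_odd {E : Type*} [NormedAddCommGroup E] [NormedSpace ℝ E]
    {f : ℝ → E} (hf : ∀ x, f (-x) = -f x) (a : ℝ) : ∫ x in -a..a, f x = 0 := by
  have h := integral_comp_neg (a := -a) (b := a) f
  simp only [neg_neg, hf, intervalIntegral.integral_neg] at h
  have h2 : (2 : ℝ) • ∫ x in -a..a, f x = 0 := by
    rw [two_smul]
    nth_rw 1 [← h]
    exact neg_add_cancel _
  exact (smul_eq_zero.mp h2).resolve_left two_ne_zero

lemma hasSum_intervalIntegral_cexp_mul {f : ℝ → ℂ} {a b : ℝ}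
    (hf : IntervalIntegrable f volume a b) (t : ℝ) :
    HasSum (fun n : ℕ => (Complex.I * t) ^ n / n ! * ∫ x in a..b, (x : ℂ) ^ n * f x)
      (∫ x in a..b, Complex.exp (Complex.I * t * x) * f x) := by
  set R := max |a| |b|
  simp_rw [← intervalIntegral.integral_const_mul]
  refine hasSum_integral_of_dominated_convergence (fun n x => (|t| * R) ^ n / n ! * ‖f x‖)
    (fun n => ?_) (fun n => ?_) ?_ ?_ ?_
  · exact ((Complex.continuous_ofReal.pow n).aestronglyMeasurable.mul
      hf.def'.aestronglyMeasurable).const_mul _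
  · refine .of_forall fun x hx => ?_
    have hxR : |x| ≤ R := by
      rcases Set.mem_uIcc.mp (Set.uIoc_subset_uIcc hx) with ⟨h1, h2⟩ | ⟨h1, h2⟩
      · exact abs_le_max_abs_abs h1 h2
      · exact (abs_le_max_abs_abs h1 h2).trans (max_comm _ _).le
    calc ‖(Complex.I * t) ^ n / n ! * ((x : ℂ) ^ n * f x)‖
        = (|t| * |x|) ^ n / n ! * ‖f x‖ := by
          simp only [norm_mul, norm_div, norm_pow, Complex.norm_I, Complex.norm_real,
            Complex.norm_natCast, Real.norm_eq_abs]
          ring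
      _ ≤ (|t| * R) ^ n / n ! * ‖f x‖ := by gcongr
  · exact .of_forall fun x _ => (Real.summable_pow_div_factorial _).mul_right _
  · simp_rw [tsum_mul_right]
    exact hf.norm.const_mul _
  · refine .of_forall fun x _ => ?_
    have hterm (n : ℕ) : (Complex.I * t) ^ n / n ! * ((x : ℂ) ^ n * f x) =
        (Complex.I * t * x) ^ n / n ! * f x := by ring
    simp_rw [hterm, Complex.exp_eq_exp_ℂ]
    exact (NormedSpace.expSeries_div_hasSum_exp (Complex.I * t * x)).mul_right (f x)

lemma integral_sin_pow_add_two_centered (n : ℕ) :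
    ∫ x in -(π / 2)..π / 2, sin x ^ (n + 2) =
      (n + 1) / (n + 2) * ∫ x in -(π / 2)..π / 2, sin x ^ n := by
  simp [integral_sin_pow]

lemma integral_sin_pow_even_centered (k : ℕ) :
    ∫ x in -(π / 2)..π / 2, sin x ^ (2 * k) = π * centralBinom k / 4 ^ k := by
  induction k with
  | zero => simp
  | succ k ih =>
    have hrec : (centralBinom (k + 1) : ℝ) = 2 * (2 * k + 1) * centralBinom k / (k + 1) := by
      rw [eq_div_iff (by positivity)]
      exact_mod_cast (mul_comm _ _).trans (succ_mul_centralBinom_succ k)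
    rw [mul_add_one, integral_sin_pow_add_two_centered, ih, hrec, pow_succ]
    push_cast
    field_simp
    ring

lemma integral_sin_pow_odd_centered (k : ℕ) :
    ∫ x in -(π / 2)..π / 2, sin x ^ (2 * k + 1) = 0 :=
  integral_eq_zero_of_odd (fun x => by rw [sin_neg, Odd.neg_pow (odd_two_mul_add_one k)]) _

lemma integral_mul_sqrt_four_sub_sq_eq_two_sin {g : ℝ → ℝ} (hg : Continuous g) :
    ∫ x in (-2 : ℝ)..2, g x * √(4 - x ^ 2) =
      ∫ θ in -(π / 2)..π / 2, g (2 * sin θ) * (2 * cos θ) ^ 2 := by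
  have hsub := integral_comp_mul_deriv (f := fun θ => 2 * sin θ) (f' := fun θ => 2 * cos θ)
    (g := fun x => g x * √(4 - x ^ 2)) (a := -(π / 2)) (b := π / 2)
    (fun θ _ => (hasDerivAt_sin θ).const_mul 2) (by fun_prop) (by fun_prop)
  simp only [Function.comp, sin_neg, sin_pi_div_two] at hsub
  norm_num at hsub
  rw [← hsub]
  refine integral_congr fun θ hθ => ?_
  have hcos : 0 ≤ cos θ := cos_nonneg_of_mem_Icc (by
    rwa [Set.uIcc_of_le (by linarith [pi_pos])] at hθ)
  have h4 : 4 - (2 * sin θ) ^ 2 = (2 * cos θ) ^ 2 := by nlinarith [sin_sq_add_cos_sq θ]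
  simp only [h4, sqrt_sq (by positivity : (0:ℝ) ≤ 2 * cos θ)]
  ring

lemma integral_pow_mul_sqrt_four_sub_sq (n : ℕ) :
    ∫ x in (-2 : ℝ)..2, x ^ n * √(4 - x ^ 2) =
      2 ^ (n + 2) / (n + 2) * ∫ θ in -(π / 2)..π / 2, sin θ ^ n := by
  have hint : ∀ m, IntervalIntegrable (fun θ => sin θ ^ m) volume (-(π / 2)) (π / 2) :=
    fun m => (continuous_sin.pow m).intervalIntegrable _ _
  calc ∫ x in (-2 : ℝ)..2, x ^ n * √(4 - x ^ 2)
      = ∫ θ in -(π / 2)..π / 2, 2 ^ (n + 2) * (sin θ ^ n - sin θ ^ (n + 2)) := by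
        rw [integral_mul_sqrt_four_sub_sq_eq_two_sin (continuous_pow n)]
        refine integral_congr fun θ _ => ?_
        rw [mul_pow 2 (cos θ), cos_sq']
        ring
    _ = 2 ^ (n + 2) / (n + 2) * ∫ θ in -(π / 2)..π / 2, sin θ ^ n := by
        rw [intervalIntegral.integral_const_mul, integral_sub (hint n) (hint (n + 2)),
          integral_sin_pow_add_two_centered]
        field_simp
        ring

lemma catalan_mul_factorial_mul_factorial_succ (k : ℕ) :
    catalan k * (k ! * (k + 1)!) = (2 * k)! := by
  rw [← choose_mul_factorial_mul_factorial (by omega : k ≤ 2 * k), show 2 * k - k = k by omega,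
    ← centralBinom_eq_two_mul_choose, ← succ_mul_catalan_eq_centralBinom, factorial_succ]
  ring

lemma cast_catalan_eq_factorial_div {K : Type*} [Field K] [CharZero K] (k : ℕ) :
    (catalan k : K) = (2 * k)! / (k ! * (k + 1)!) := by
  rw [eq_div_iff (by simp [factorial_ne_zero])]
  exact_mod_cast catalan_mul_factorial_mul_factorial_succ k

lemma integral_pow_mul_rhoSC (n : ℕ) :
    ∫ x in (-2 : ℝ)..2, x ^ n * rhoSC x =
      2 ^ (n + 1) / (π * (n + 2)) * ∫ θ in -(π / 2)..π / 2, sin θ ^ n := by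
  simp_rw [rhoSC, mul_div_assoc']
  rw [intervalIntegral.integral_div, integral_pow_mul_sqrt_four_sub_sq]
  field_simp
  ring

lemma integral_pow_mul_rhoSC_even (k : ℕ) :
    ∫ x in (-2 : ℝ)..2, x ^ (2 * k) * rhoSC x = catalan k := by
  have hcat : ((k + 1 : ℕ) : ℝ) * catalan k = centralBinom k := by
    exact_mod_cast succ_mul_catalan_eq_centralBinom k
  rw [integral_pow_mul_rhoSC, integral_sin_pow_even_centered, ← hcat, pow_succ, pow_mul]
  push_cast
  field_simp
  ring

lemma integral_pow_mul_rhoSC_odd (k : ℕ) :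
    ∫ x in (-2 : ℝ)..2, x ^ (2 * k + 1) * rhoSC x = 0 := by
  rw [integral_pow_mul_rhoSC, integral_sin_pow_odd_centered, mul_zero]

lemma I_mul_pow_two_mul_div_factorial_mul_catalan (t : ℝ) (k : ℕ) :
    (Complex.I * t) ^ (2 * k) / (2 * k)! * (catalan k : ℂ) =
      (((-1 : ℝ) ^ k * t ^ (2 * k) / (k ! * (k + 1)!) : ℝ) : ℂ) := by
  have hfac : ((2 * k)! : ℂ) ≠ 0 := Nat.cast_ne_zero.mpr (factorial_ne_zero _)
  rw [cast_catalan_eq_factorial_div, pow_mul, mul_pow, Complex.I_sq]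
  push_cast
  field_simp
  ring

lemma summable_besselJ1_series (x : ℝ) :
    Summable fun k : ℕ => (-1 : ℝ) ^ k * (x ^ 2 / 4) ^ k / (k ! * (k + 1)! : ℝ) := by
  refine .of_norm_bounded (Real.summable_pow_div_factorial (x ^ 2 / 4)) fun k => ?_
  rw [norm_div, norm_mul, norm_pow, norm_neg, norm_one, one_pow, one_mul,
    Real.norm_of_nonneg (by positivity), Real.norm_of_nonneg (by positivity)]
  gcongr
  exact le_mul_of_one_le_right (by positivity) (by exact_mod_cast (k + 1).factorial_pos)

lemma hasSum_besselJ1_two_mul_div {t : ℝ} (ht : t ≠ 0) :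
    HasSum (fun k : ℕ => (-1 : ℝ) ^ k * t ^ (2 * k) / (k ! * (k + 1)!))
      (besselJ1 (2 * t) / t) := by
  have h := (summable_besselJ1_series (2 * t)).hasSum
  rw [besselJ1, mul_div_right_comm, show 2 * t / 2 / t = 1 by field_simp, one_mul]
  convert h using 3 with k
  rw [pow_mul]
  ring

/-- `∫_{-2}^{2} e^{itx} ρ_sc(x) dx = J₁(2t)/t` for all real `t ≠ 0`. -/
theorem semicircle_fourier_bessel (t : ℝ) (ht : t ≠ 0) :
    (∫ x in (-2 : ℝ)..2, Complex.exp (Complex.I * t * x) * (rhoSC x : ℂ)) =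
      ((besselJ1 (2 * t) / t : ℝ) : ℂ) := by
  have hρ : Continuous fun x => (rhoSC x : ℂ) := by unfold rhoSC; fun_prop
  have hmoment (n : ℕ) : ∫ x in (-2 : ℝ)..2, (x : ℂ) ^ n * (rhoSC x : ℂ) =
      ((∫ x in (-2 : ℝ)..2, x ^ n * rhoSC x : ℝ) : ℂ) := by
    rw [← intervalIntegral.integral_ofReal]
    push_cast
    rfl
  let c (n : ℕ) : ℂ :=
    (Complex.I * t) ^ n / n ! * ∫ x in (-2 : ℝ)..2, (x : ℂ) ^ n * (rhoSC x : ℂ)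
  have heven : HasSum (fun k => c (2 * k)) ((besselJ1 (2 * t) / t : ℝ) : ℂ) := by
    simp_rw [c, hmoment, integral_pow_mul_rhoSC_even, Complex.ofReal_natCast,
      I_mul_pow_two_mul_div_factorial_mul_catalan]
    exact Complex.hasSum_ofReal.mpr (hasSum_besselJ1_two_mul_div ht)
  have hodd : HasSum (fun k => c (2 * k + 1)) 0 := by
    convert hasSum_zero with k
    simp only [c, hmoment, integral_pow_mul_rhoSC_odd, Complex.ofReal_zero, mul_zero]
  exact (hasSum_intervalIntegral_cexp_mul (hρ.intervalIntegrable _ _) t).unique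
    (by simpa only [add_zero] using heven.even_add_odd hodd)
end
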